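/- arXiv:0804.2378 — 8 statements merged into one kernel-verified Lean document; each statement's English description precedes it below -/
import Mathlib

section
/- For λ = 2cos(π/k) with k ≥ 3 an integer, with R the matrix with rows (0,1),(1,λ) and L the matrix with rows (0,-1),(1,λ), one has R·L^(k-1) = diag(1, -1), R·L^(k-1)·R = -L, and R·L^(k-1)·L = -R. -/
open Real Matrix

lemma Lpow_aux (θ : ℝ) : ∀ n : ℕ,
    Real.sin θ • ((!![0, -1; 1, 2 * Real.cos θ] : Matrix (Fin 2) (Fin 2) ℝ) ^ n) =
      !![-Real.sin (((n : ℝ) - 1) * θ), -Real.sin (n * θ);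
         Real.sin (n * θ), Real.sin (((n : ℝ) + 1) * θ)] := by
  intro n
  induction n with
  | zero =>
      ext i j
      fin_cases i <;> fin_cases j <;>
        simp [Matrix.one_apply, Real.sin_neg] <;> ring_nf <;>
        simp [Real.sin_neg]
  | succ n ih =>
      rw [pow_succ, ← Matrix.smul_mul, ih]
      have e1 : Real.sin (((n : ℝ) + 1 + 1) * θ) =
          2 * Real.cos θ * Real.sin (((n : ℝ) + 1) * θ) - Real.sin ((n : ℝ) * θ) := by
        have h1 : ((n : ℝ) + 1 + 1) * θ = ((n : ℝ) + 1) * θ + θ := by ring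
        have h2 : (n : ℝ) * θ = ((n : ℝ) + 1) * θ - θ := by ring
        rw [h1, h2, Real.sin_add, Real.sin_sub]; ring
      have e2 : Real.sin (((n : ℝ) + 1) * θ) =
          2 * Real.cos θ * Real.sin ((n : ℝ) * θ) - Real.sin (((n : ℝ) - 1) * θ) := by
        have h1 : ((n : ℝ) + 1) * θ = (n : ℝ) * θ + θ := by ring
        have h2 : ((n : ℝ) - 1) * θ = (n : ℝ) * θ - θ := by ring
        rw [h1, h2, Real.sin_add, Real.sin_sub]; ring
      ext i j
      fin_cases i <;> fin_cases j <;>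
        · push_cast
          simp [Matrix.mul_apply, Fin.sum_univ_two]
          try linear_combination e2
          try linear_combination -e1

theorem stmt1 (k : ℕ) (hk : 3 ≤ k) (lam : ℝ) (hlam : lam = 2 * Real.cos (π / k))
    (R L : Matrix (Fin 2) (Fin 2) ℝ)
    (hR : R = !![0, 1; 1, lam]) (hL : L = !![0, -1; 1, lam]) :
    R * L ^ (k - 1) = !![1, 0; 0, -1] ∧
    R * L ^ (k - 1) * R = -L ∧
    R * L ^ (k - 1) * L = -R := by
  set θ := π / k with hθ
  have hk0 : (0 : ℝ) < (k : ℝ) := by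
    exact_mod_cast lt_of_lt_of_le (by norm_num) hk
  have hθpos : 0 < θ := by rw [hθ]; positivity
  have hθlt : θ < π := by
    rw [hθ]
    calc π / (k:ℝ) ≤ π / 3 := by
          apply div_le_div_of_nonneg_left pi_pos.le (by norm_num)
          exact_mod_cast hk
      _ < π := by linarith [pi_pos]
  have hs : Real.sin θ ≠ 0 := ne_of_gt (Real.sin_pos_of_pos_of_lt_pi hθpos hθlt)
  have hcast : ((k - 1 : ℕ) : ℝ) = (k : ℝ) - 1 := by
    have : 1 ≤ k := by omega
    push_cast [this]; ring
  have hkθ : (k : ℝ) * θ = π := by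
    rw [hθ]; field_simp
  have hL1 : L ^ (k - 1) = !![-lam, -1; 1, 0] := by
    have := Lpow_aux θ (k - 1)
    rw [← hlam, ← hL, hcast] at this
    have e1 : ((k:ℝ) - 1 - 1) * θ = π - 2 * θ := by rw [← hkθ]; ring
    have e2 : ((k:ℝ) - 1) * θ = π - θ := by rw [← hkθ]; ring
    have e3 : ((k:ℝ) - 1 + 1) * θ = π := by rw [← hkθ]; ring
    rw [e1, e2, e3, Real.sin_pi_sub, Real.sin_pi_sub, Real.sin_pi] at this
    have h2 : Real.sin (2 * θ) = 2 * Real.sin θ * Real.cos θ := Real.sin_two_mul θ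
    rw [h2] at this
    apply smul_right_injective (Matrix (Fin 2) (Fin 2) ℝ) hs
    dsimp only
    rw [this]
    ext i j
    fin_cases i <;> fin_cases j <;> simp [hlam] <;> ring
  refine ⟨?_, ?_, ?_⟩ <;>
    · rw [hL1, hR]
      try rw [hL]
      ext i j
      fin_cases i <;> fin_cases j <;>
        simp [Matrix.mul_apply, Fin.sum_univ_two] <;> ring
end

section
/- Let 0 < p < 1 and k ≥ 3 an integer. Define g(x) = 1 - px/(p + (1-p)x) - (1-x)^(1/(k-1)) on [0,1]. Then g(0) = 0 and there exists at most one x > 0 in (0,1] satisfying g(x) = 0. -/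
open Real

lemma aux_key (k : ℕ) (hk : 3 ≤ k) (p : ℝ) (hp : 0 < p) (hp1 : p < 1)
    (x y : ℝ) (hx0 : 0 < x) (hxy : x < y) (hy1 : y ≤ 1)
    (hgx : 1 - p * x / (p + (1 - p) * x) - (1 - x) ^ ((1 : ℝ) / (k - 1)) = 0)
    (hgy : 1 - p * y / (p + (1 - p) * y) - (1 - y) ^ ((1 : ℝ) / (k - 1)) = 0) :
    False := by
  set r : ℝ := (1 : ℝ) / (k - 1) with hr
  have hk2 : (2 : ℝ) ≤ (k : ℝ) - 1 := by
    have : (3 : ℝ) ≤ (k : ℝ) := by exact_mod_cast hk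
    linarith
  have hr0 : 0 < r := by rw [hr]; positivity
  have hr1 : r < 1 := by
    rw [hr, div_lt_one (by linarith)]; linarith
  have hy0 : 0 < y := hx0.trans hxy
  set t : ℝ := x / y with ht
  have ht0 : 0 < t := div_pos hx0 hy0
  have ht1 : t < 1 := (div_lt_one hy0).2 hxy
  -- strict concavity of rpow
  have hsc := Real.strictConcaveOn_rpow hr0 hr1
  have hne : (1 : ℝ) ≠ 1 - y := by linarith
  have hkey := hsc.2 (Set.mem_Ici.2 (by norm_num : (0:ℝ) ≤ 1))
      (Set.mem_Ici.2 (by linarith : (0:ℝ) ≤ 1 - y)) hne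
      (by linarith : 0 < 1 - t) ht0 (by ring)
  have hcomb : (1 - t) • (1:ℝ) + t • (1 - y) = 1 - x := by
    have : t * y = x := div_mul_cancel₀ x hy0.ne'
    simp only [smul_eq_mul]
    nlinarith
  rw [hcomb] at hkey
  simp only [smul_eq_mul, Real.one_rpow] at hkey
  -- hkey : (1 - t) * 1 + t * (1 - y) ^ r < (1 - x) ^ r
  have hdx : 0 < p + (1 - p) * x := by nlinarith
  have hdy : 0 < p + (1 - p) * y := by nlinarith
  have hAx : (1 - x) ^ r = 1 - p * x / (p + (1 - p) * x) := by linarith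
  have hAy : (1 - y) ^ r = 1 - p * y / (p + (1 - p) * y) := by linarith
  rw [hAx, hAy] at hkey
  -- now derive contradiction: p*x/(p+(1-p)x) < t * (p*y/(p+(1-p)y))
  have hineq : t * (p * y / (p + (1 - p) * y)) ≤ p * x / (p + (1 - p) * x) := by
    have he : t * (p * y / (p + (1 - p) * y)) = p * x / (p + (1 - p) * y) := by
      rw [ht]; field_simp
    rw [he]
    apply div_le_div_of_nonneg_left (by positivity) hdx
    nlinarith
  nlinarith

theorem stmt3 (k : ℕ) (hk : 3 ≤ k) (p : ℝ) (hp : 0 < p) (hp1 : p < 1)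
    (g : ℝ → ℝ)
    (hg : ∀ x ∈ Set.Icc (0:ℝ) 1,
      g x = 1 - p * x / (p + (1 - p) * x) - (1 - x) ^ ((1 : ℝ) / (k - 1))) :
    g 0 = 0 ∧
    ∀ x ∈ Set.Ioc (0:ℝ) 1, ∀ y ∈ Set.Ioc (0:ℝ) 1, g x = 0 → g y = 0 → x = y := by
  constructor
  · rw [hg 0 (by norm_num)]
    simp
  · rintro x ⟨hx0, hx1⟩ y ⟨hy0, hy1⟩ hgx hgy
    rw [hg x ⟨hx0.le, hx1⟩] at hgx
    rw [hg y ⟨hy0.le, hy1⟩] at hgy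
    rcases lt_trichotomy x y with h | h | h
    · exact absurd (aux_key k hk p hp hp1 x y hx0 h hy1 hgx hgy) not_false
    · exact h
    · exact absurd (aux_key k hk p hp hp1 y x hy0 h hx1 hgy hgx) not_false
end

section
/- Let 1/k < p < 1 where k ≥ 3 is an integer. The function g̃(x) = (1-x)(1 + (p/(1-p))x)^(k-1) - 1 satisfies g̃(0) = 0, g̃(1) = -1, and has a unique zero in the open interval (0,1). -/
open Real

/-!
With `a = p / (1 - p)` and `m = k - 1`, the derivative of `g̃` is
`(1 + a x)^(m-1) · a (m + 1) · (c - x)` with `c = (m a - 1) / (a (m + 1))`, and `c ∈ (0, 1)`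
because `k p > 1`. So `g̃` strictly increases from `g̃ 0 = 0` to a positive value at `c`, then
strictly decreases to `g̃ 1 = -1`: it has no zero in `(0, c]` and exactly one in `(c, 1)`.
-/

noncomputable def gTilde (a : ℝ) (m : ℕ) (x : ℝ) : ℝ :=
  (1 - x) * (1 + a * x) ^ m - 1

noncomputable def gTildeCriticalPoint (a : ℝ) (m : ℕ) : ℝ :=
  (m * a - 1) / (a * (m + 1))

theorem existsUnique_zero_of_strictMonoOn_of_strictAntiOn {g : ℝ → ℝ} {l c r : ℝ}
    (hlc : l < c) (hcr : c < r) (hg : ContinuousOn g (Set.Icc l r))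
    (hl : g l = 0) (hr : g r < 0)
    (hmono : StrictMonoOn g (Set.Icc l c)) (hanti : StrictAntiOn g (Set.Icc c r)) :
    ∃! x ∈ Set.Ioo l r, g x = 0 := by
  have hgc : 0 < g c := hl ▸ hmono (Set.left_mem_Icc.2 hlc.le) (Set.right_mem_Icc.2 hlc.le) hlc
  obtain ⟨z, hz, hgz⟩ := intermediate_value_Ioo' hcr.le
    (hg.mono (Set.Icc_subset_Icc_left hlc.le)) ⟨hr, hgc⟩
  refine ⟨z, ⟨⟨hlc.trans hz.1, hz.2⟩, hgz⟩, ?_⟩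
  rintro y ⟨⟨hly, hyr⟩, hgy⟩
  rcases le_or_gt y c with hyc | hcy
  · have := hmono (Set.left_mem_Icc.2 hlc.le) ⟨hly.le, hyc⟩ hly
    rw [hl, hgy] at this
    exact absurd this (lt_irrefl 0)
  · exact hanti.injOn ⟨hcy.le, hyr.le⟩ ⟨hz.1.le, hz.2.le⟩ (hgy.trans hgz.symm)

section gTilde

variable {a : ℝ} {m : ℕ}

theorem gTilde_zero : gTilde a m 0 = 0 := by simp [gTilde]

theorem gTilde_one : gTilde a m 1 = -1 := by simp [gTilde]

theorem hasDerivAt_gTilde (hm : 1 ≤ m) (x : ℝ) :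
    HasDerivAt (gTilde a m) ((1 + a * x) ^ (m - 1) * (m * a * (1 - x) - (1 + a * x))) x := by
  have h₁ : HasDerivAt (fun x ↦ 1 - x) (-1) x := by
    simpa using (hasDerivAt_id x).const_sub 1
  have h₂ : HasDerivAt (fun x ↦ 1 + a * x) a x := by
    simpa using ((hasDerivAt_id x).const_mul a).const_add 1
  refine ((h₁.mul (h₂.pow m)).sub_const 1).congr_deriv ?_
  obtain ⟨n, rfl⟩ := Nat.exists_eq_add_of_le hm
  simp only [Pi.pow_apply, Nat.add_sub_cancel_left]
  ring

theorem continuous_gTilde : Continuous (gTilde a m) := by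
  unfold gTilde
  fun_prop

theorem mul_sub_sub_eq_mul_sub_gTildeCriticalPoint (ha : a ≠ 0) (x : ℝ) :
    m * a * (1 - x) - (1 + a * x) = a * (m + 1) * (gTildeCriticalPoint a m - x) := by
  unfold gTildeCriticalPoint
  field_simp
  ring

theorem gTildeCriticalPoint_pos (ha : 0 < a) (hma : 1 < m * a) : 0 < gTildeCriticalPoint a m :=
  div_pos (by linarith) (by positivity)

theorem gTildeCriticalPoint_lt_one (ha : 0 < a) : gTildeCriticalPoint a m < 1 := by
  rw [gTildeCriticalPoint, div_lt_one (by positivity)]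
  nlinarith

theorem deriv_gTilde (ha : 0 < a) (hm : 1 ≤ m) (x : ℝ) :
    deriv (gTilde a m) x
      = (1 + a * x) ^ (m - 1) * (a * (m + 1) * (gTildeCriticalPoint a m - x)) := by
  rw [(hasDerivAt_gTilde hm x).deriv, mul_sub_sub_eq_mul_sub_gTildeCriticalPoint ha.ne']

theorem strictMonoOn_gTilde (ha : 0 < a) (hm : 1 ≤ m) :
    StrictMonoOn (gTilde a m) (Set.Icc 0 (gTildeCriticalPoint a m)) := by
  refine strictMonoOn_of_deriv_pos (convex_Icc _ _) continuous_gTilde.continuousOn fun x hx ↦ ?_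
  rw [interior_Icc] at hx
  rw [deriv_gTilde ha hm]
  have : 0 < 1 + a * x := by nlinarith [hx.1]
  exact mul_pos (pow_pos this _) (mul_pos (by positivity) (by linarith [hx.2]))

theorem strictAntiOn_gTilde (ha : 0 < a) (hm : 1 ≤ m) (hma : 1 < m * a) :
    StrictAntiOn (gTilde a m) (Set.Ici (gTildeCriticalPoint a m)) := by
  refine strictAntiOn_of_deriv_neg (convex_Ici _) continuous_gTilde.continuousOn fun x hx ↦ ?_
  rw [interior_Ici] at hx
  rw [deriv_gTilde ha hm]
  have : 0 < 1 + a * x := by nlinarith [gTildeCriticalPoint_pos ha hma, hx.out]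
  exact mul_neg_of_pos_of_neg (pow_pos this _)
    (mul_neg_of_pos_of_neg (by positivity) (by linarith [hx.out]))

theorem existsUnique_gTilde_eq_zero (ha : 0 < a) (hm : 1 ≤ m) (hma : 1 < m * a) :
    ∃! x ∈ Set.Ioo (0 : ℝ) 1, gTilde a m x = 0 :=
  existsUnique_zero_of_strictMonoOn_of_strictAntiOn (gTildeCriticalPoint_pos ha hma)
    (gTildeCriticalPoint_lt_one ha) continuous_gTilde.continuousOn gTilde_zero
    (by rw [gTilde_one]; norm_num) (strictMonoOn_gTilde ha hm)
    ((strictAntiOn_gTilde ha hm hma).mono Set.Icc_subset_Ici_self)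

end gTilde

theorem one_lt_mul_div_one_sub {m : ℕ} {p : ℝ} (hp : 1 / ((m : ℝ) + 1) < p) (hp1 : p < 1) :
    1 < m * (p / (1 - p)) := by
  rw [div_lt_iff₀ (by positivity)] at hp
  rw [mul_div_assoc', lt_div_iff₀ (by linarith)]
  linarith

theorem stmt4 (k : ℕ) (hk : 3 ≤ k) (p : ℝ) (hp : 1 / (k : ℝ) < p) (hp1 : p < 1)
    (g : ℝ → ℝ)
    (hg : ∀ x : ℝ, g x = (1 - x) * (1 + (p / (1 - p)) * x) ^ (k - 1) - 1) :
    g 0 = 0 ∧ g 1 = -1 ∧ ∃! x ∈ Set.Ioo (0:ℝ) 1, g x = 0 := by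
  obtain ⟨m, rfl⟩ : ∃ m, k = m + 1 := ⟨k - 1, by omega⟩
  have hg : g = gTilde (p / (1 - p)) m := funext fun x ↦ by simpa [gTilde] using hg x
  have hp0 : 0 < p := lt_trans (by positivity) hp
  push_cast at hp
  subst hg
  exact ⟨gTilde_zero, gTilde_one, existsUnique_gTilde_eq_zero (div_pos hp0 (by linarith))
    (by omega) (one_lt_mul_div_one_sub hp hp1)⟩
end

section
/- Let k ≥ 3, λ = 2cos(π/k), f_0(q) = λ + 1/q, f(q) = λ - 1/q, and f_j = f^j ∘ f_0 for 0 ≤ j ≤ k-2. Then for all 0 ≤ j ≤ k-2 and all x > 0, f_j(x) = 1 / f_{k-2-j}(1/x). -/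
/-!
Writing `θ = π / k` and `s n = sin (n θ)`, the recurrence `s (n + 2) = 2 cos θ · s (n + 1) - s n`
shows by induction that `f_j` is the Möbius map `x ↦ (s (j+2) x + s (j+1)) / (s (j+1) x + s j)`.
The reflection `s (k - n) = s n` turns the coefficients of `f_{k-2-j}` into those of `f_j` in
reverse order, which is exactly the identity `f_j x = 1 / f_{k-2-j} (1 / x)`.
-/

open Real

noncomputable def sinRatio (θ t x : ℝ) : ℝ :=
  (sin ((t + 2) * θ) * x + sin ((t + 1) * θ)) / (sin ((t + 1) * θ) * x + sin (t * θ))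

lemma sin_add_two_mul (θ t : ℝ) :
    sin ((t + 2) * θ) = 2 * cos θ * sin ((t + 1) * θ) - sin (t * θ) := by
  rw [show (t + 2) * θ = (t + 1) * θ + θ by ring, show t * θ = (t + 1) * θ - θ by ring,
    sin_add, sin_sub]
  ring

lemma sinRatio_zero {θ x : ℝ} (hθ : sin θ ≠ 0) (hx : x ≠ 0) :
    sinRatio θ 0 x = 2 * cos θ + 1 / x := by
  simp only [sinRatio, zero_add, zero_mul, one_mul, sin_zero, add_zero, sin_two_mul]
  field_simp

lemma two_cos_sub_one_div_sinRatio {θ t x : ℝ}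
    (h : sin ((t + 2) * θ) * x + sin ((t + 1) * θ) ≠ 0) :
    2 * cos θ - 1 / sinRatio θ t x = sinRatio θ (t + 1) x := by
  rw [sinRatio, sinRatio, one_div_div, sin_add_two_mul θ (t + 1), show t + 1 + 1 = t + 2 by ring,
    eq_div_iff h, sub_mul, div_mul_cancel₀ _ h]
  linear_combination -sin_add_two_mul θ t

lemma iterate_two_cos_sub_one_div {θ x : ℝ} (hθ : 0 < θ) (hx : 0 < x) (j : ℕ)
    (hj : ((j : ℝ) + 2) * θ ≤ π) :
    (fun q => 2 * cos θ - 1 / q)^[j] (2 * cos θ + 1 / x) = sinRatio θ j x := by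
  induction j with
  | zero =>
    rw [Function.iterate_zero_apply, Nat.cast_zero]
    refine (sinRatio_zero (sin_pos_of_pos_of_lt_pi hθ ?_).ne' hx.ne').symm
    push_cast at hj
    linarith
  | succ j ih =>
    push_cast at hj
    rw [Function.iterate_succ_apply', ih (by nlinarith), Nat.cast_succ]
    apply two_cos_sub_one_div_sinRatio
    have hs₂ : 0 ≤ sin ((j + 2) * θ) := sin_nonneg_of_nonneg_of_le_pi (by positivity) (by nlinarith)
    have hs₁ : 0 < sin ((j + 1) * θ) := sin_pos_of_pos_of_lt_pi (by positivity) (by nlinarith)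
    positivity

lemma sinRatio_eq_one_div_sinRatio_one_div {θ a b x : ℝ} (hab : (a + b + 2) * θ = π)
    (hx : x ≠ 0) : sinRatio θ a x = 1 / sinRatio θ b (1 / x) := by
  have reflect : ∀ u v : ℝ, u + v = a + b + 2 → sin (v * θ) = sin (u * θ) := fun u v huv => by
    rw [show v * θ = π - u * θ by rw [← hab, ← huv]; ring, sin_pi_sub]
  rw [sinRatio, sinRatio, reflect a (b + 2) (by ring), reflect (a + 1) (b + 1) (by ring),
    reflect (a + 2) b (by ring), one_div_div]
  field_simp
  ring

theorem stmt5 (k : ℕ) (hk : 3 ≤ k) (lam : ℝ) (hlam : lam = 2 * Real.cos (π / k))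
    (f₀ f : ℝ → ℝ) (hf₀ : ∀ q, f₀ q = lam + 1 / q) (hf : ∀ q, f q = lam - 1 / q) :
    ∀ j ≤ k - 2, ∀ x : ℝ, 0 < x →
      f^[j] (f₀ x) = 1 / (f^[k - 2 - j] (f₀ (1 / x))) := by
  intro j hj x hx
  obtain rfl : f₀ = _ := funext hf₀
  obtain rfl : f = _ := funext hf
  subst hlam
  have hk₀ : (k : ℝ) ≠ 0 := by positivity
  have hθ : 0 < π / k := by positivity
  have hsum : ∀ i ≤ k - 2, ((i : ℝ) + ((k - 2 - i : ℕ) : ℝ) + 2) * (π / k) = π := fun i hi => by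
    rw [Nat.cast_sub hi, Nat.cast_sub (by omega : 2 ≤ k)]
    field_simp
    ring
  have hbound : ∀ i ≤ k - 2, ((i : ℝ) + 2) * (π / k) ≤ π := fun i hi => by
    refine le_trans ?_ (hsum i hi).le
    have : (0 : ℝ) ≤ (k - 2 - i : ℕ) := Nat.cast_nonneg _
    gcongr
    linarith
  rw [iterate_two_cos_sub_one_div hθ hx j (hbound j hj),
    iterate_two_cos_sub_one_div hθ (one_div_pos.mpr hx) _ (hbound _ (Nat.sub_le _ _)),
    sinRatio_eq_one_div_sinRatio_one_div (hsum j hj) hx.ne']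
end

section
/- Let 0 < ρ ≤ 1, k ≥ 3, Z = Σ_{s=0}^{k-2} ρ^s. For integers 0 ≤ i, j ≤ k-2, define Δ(i,j) = Σ_{s=0}^{j-1} ρ^s/Z + (ρ^j/Z)·Σ_{s=i}^{k-2} ρ^s/Z − Σ_{s=k-1-j}^{k-2} ρ^s/Z − (ρ^{k-2-j}/Z)·Σ_{s=0}^{k-2-i} ρ^s/Z. Then Δ(i,j) ≥ 0. -/
open Finset

/-! Write `G n = ∑_{s<n} ρ^s`, so `Z = G (k-1)`, and put `u = k-2-i`, `w = k-2-j`. Multiplied by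
`Z²`, `Δ(i,j)` becomes `G j · Z · (1 - ρ^(w+1)) + G (u+1) · (ρ^(i+j) - ρ^w)`. If `i + j ≤ w` both
terms are nonnegative. Otherwise `i + j = w + m` with `m ≥ 1`, and the expression factors as
`(1-ρ) (G (w+1) · G j · Z - ρ^w · G (u+1) · G m)`. Since `(u+1) + m = 2j+1`, log-concavity of
`n ↦ G n` gives `G (u+1) · G m ≤ G j · G (j+1) ≤ G j · Z`, and `ρ^w ≤ G (w+1)`. -/

def geomSum {R : Type*} [Semiring R] (x : R) (n : ℕ) : R := ∑ s ∈ range n, x ^ s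

section Semiring

variable {R : Type*} [Semiring R] (x : R)

theorem geomSum_succ (n : ℕ) : geomSum x (n + 1) = geomSum x n + x ^ n :=
  sum_range_succ _ _

theorem geomSum_add (p q : ℕ) : geomSum x (p + q) = geomSum x p + x ^ p * geomSum x q := by
  simp [geomSum, sum_range_add, pow_add, mul_sum]

theorem sum_Icc_pow (a b : ℕ) :
    ∑ s ∈ Icc a b, x ^ s = x ^ a * geomSum x (b + 1 - a) := by
  rw [← Ico_add_one_right_eq_Icc, sum_Ico_eq_sum_range, geomSum, mul_sum]
  simp only [pow_add]

end Semiring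

section Ring

variable {R : Type*} [CommRing R] (x : R)

theorem one_sub_mul_geomSum (n : ℕ) : (1 - x) * geomSum x n = 1 - x ^ n :=
  mul_neg_geom_sum x n

theorem geomSum_add_mul_geomSum_add (a p q : ℕ) :
    geomSum x (a + p) * geomSum x (a + q) =
      geomSum x a * geomSum x (a + p + q) + x ^ a * geomSum x p * geomSum x q := by
  rw [geomSum_add x a p, geomSum_add x a q, add_assoc, geomSum_add x a (p + q),
    geomSum_add x p q]
  linear_combination (x ^ a * geomSum x p * geomSum x q) * one_sub_mul_geomSum x a
    - (x ^ a * geomSum x a * geomSum x q) * one_sub_mul_geomSum x p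

end Ring

section Ordered

variable {R : Type*} [CommRing R] [LinearOrder R] [IsStrictOrderedRing R] {x : R}

theorem geomSum_nonneg (hx : 0 ≤ x) (n : ℕ) : 0 ≤ geomSum x n :=
  sum_nonneg fun _ _ => pow_nonneg hx _

theorem geomSum_mul_le_of_add_eq (hx : 0 ≤ x) {u m j : ℕ} (h : u + m = 2 * j + 1) :
    geomSum x u * geomSum x m ≤ geomSum x j * geomSum x (j + 1) := by
  wlog hum : u ≤ m generalizing u m
  · rw [mul_comm]; exact this (by omega) (by omega)
  have hsplit := geomSum_add_mul_geomSum_add x u (j - u) (j + 1 - u)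
  rw [show u + (j - u) + (j + 1 - u) = m by omega, show u + (j - u) = j by omega,
    show u + (j + 1 - u) = j + 1 by omega] at hsplit
  rw [hsplit, mul_assoc]
  exact le_add_of_nonneg_right <| mul_nonneg (pow_nonneg hx u)
    (mul_nonneg (geomSum_nonneg hx _) (geomSum_nonneg hx _))

theorem delta_numerator_nonneg (hx0 : 0 ≤ x) (hx1 : x ≤ 1) {i j u w : ℕ} (h : i + u = j + w) :
    0 ≤ geomSum x j * geomSum x (j + w + 1) * (1 - x ^ (w + 1))
      + geomSum x (u + 1) * (x ^ (i + j) - x ^ w) := by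
  rcases le_or_gt (i + j) w with hle | hlt
  · exact add_nonneg
      (mul_nonneg (mul_nonneg (geomSum_nonneg hx0 _) (geomSum_nonneg hx0 _))
        (sub_nonneg.2 (pow_le_one₀ hx0 hx1)))
      (mul_nonneg (geomSum_nonneg hx0 _) (sub_nonneg.2 (pow_le_pow_of_le_one hx0 hx1 hle)))
  obtain ⟨m, hm⟩ : ∃ m, i + j = w + (m + 1) := ⟨i + j - w - 1, by omega⟩
  have hpair : geomSum x (u + 1) * geomSum x (m + 1) ≤ geomSum x j * geomSum x (j + 1) :=
    geomSum_mul_le_of_add_eq hx0 (by omega)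
  have hpow : x ^ w ≤ geomSum x (w + 1) := by
    rw [geomSum_succ]; exact le_add_of_nonneg_left (geomSum_nonneg hx0 w)
  have hmono : geomSum x (j + 1) ≤ geomSum x (j + w + 1) := by
    rw [show j + w + 1 = j + 1 + w by ring, geomSum_add x (j + 1) w]
    exact le_add_of_nonneg_right (mul_nonneg (pow_nonneg hx0 _) (geomSum_nonneg hx0 w))
  have hbound : x ^ w * (geomSum x (u + 1) * geomSum x (m + 1))
      ≤ geomSum x (w + 1) * (geomSum x j * geomSum x (j + w + 1)) :=
    mul_le_mul hpow (hpair.trans (mul_le_mul_of_nonneg_left hmono (geomSum_nonneg hx0 j)))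
      (mul_nonneg (geomSum_nonneg hx0 _) (geomSum_nonneg hx0 _)) (geomSum_nonneg hx0 _)
  have hfactor : geomSum x j * geomSum x (j + w + 1) * (1 - x ^ (w + 1))
      + geomSum x (u + 1) * (x ^ (i + j) - x ^ w)
      = (1 - x) * (geomSum x (w + 1) * (geomSum x j * geomSum x (j + w + 1))
          - x ^ w * (geomSum x (u + 1) * geomSum x (m + 1))) := by
    rw [hm, pow_add]
    linear_combination (x ^ w * geomSum x (u + 1)) * one_sub_mul_geomSum x (m + 1)
      - (geomSum x j * geomSum x (j + w + 1)) * one_sub_mul_geomSum x (w + 1)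
  rw [hfactor]
  exact mul_nonneg (sub_nonneg.2 hx1) (sub_nonneg.2 hbound)

end Ordered

theorem stmt13 (k : ℕ) (hk : 3 ≤ k) (ρ : ℝ) (hρ : 0 < ρ) (hρ1 : ρ ≤ 1)
    (Z : ℝ) (hZ : Z = ∑ s ∈ Finset.range (k - 1), ρ ^ s)
    (i j : ℕ) (hi : i ≤ k - 2) (hj : j ≤ k - 2) :
    0 ≤ (∑ s ∈ Finset.range j, ρ ^ s / Z)
        + (ρ ^ j / Z) * ∑ s ∈ Finset.Icc i (k - 2), ρ ^ s / Z
        - (∑ s ∈ Finset.Icc (k - 1 - j) (k - 2), ρ ^ s / Z)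
        - (ρ ^ (k - 2 - j) / Z) * ∑ s ∈ Finset.range (k - 1 - i), ρ ^ s / Z := by
  obtain ⟨u, hu⟩ := Nat.exists_eq_add_of_le hi
  obtain ⟨w, hw⟩ := Nat.exists_eq_add_of_le hj
  have hZ' : Z = geomSum ρ (j + w + 1) := by rw [hZ, ← hw]; congr 2; omega
  have hZ0 : Z ≠ 0 := hZ' ▸ (geom_sum_pos hρ.le (by omega)).ne'
  simp only [← sum_div]
  rw [sum_Icc_pow, sum_Icc_pow, show k - 2 + 1 - i = u + 1 by omega,
    show k - 2 + 1 - (k - 1 - j) = j by omega, show k - 1 - j = w + 1 by omega,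
    show k - 2 - j = w by omega, show k - 1 - i = u + 1 by omega]
  have hN := delta_numerator_nonneg hρ.le hρ1 (show i + u = j + w by omega)
  rw [← hZ'] at hN
  have hΔ : geomSum ρ j / Z + ρ ^ j / Z * (ρ ^ i * geomSum ρ (u + 1) / Z)
      - ρ ^ (w + 1) * geomSum ρ j / Z - ρ ^ w / Z * (geomSum ρ (u + 1) / Z)
      = (geomSum ρ j * Z * (1 - ρ ^ (w + 1)) + geomSum ρ (u + 1) * (ρ ^ (i + j) - ρ ^ w))
        / Z ^ 2 := by
    field_simp
    ring
  exact hΔ ▸ div_nonneg hN (sq_nonneg Z)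
end

section
/- Let 0 < λ < 2 and define the sequence (F̃ₙ) by F̃₀ ≥ 0, F̃₁ ≥ 0 (not both zero) and F̃_{n+1} = |λ F̃ₙ − F̃_{n−1}|. Then the sequence (F̃ₙ) is bounded. -/
/-!
For `0 < λ < 2` the quadratic form `Q(x, y) = x² - λxy + y²` is positive definite, and the linear
recurrence `z = λy - x` preserves it: `(x, y) ↦ (y, λy - x)` is a rotation in the metric of `Q`.
Taking the absolute value can only decrease `Q`, because it replaces `z` by `|z| ≥ z` in
`Q(y, z) = z² - λyz + y²`, where `λy ≥ 0`. Hence `Q(F̃ₙ, F̃ₙ₊₁)` is non-increasing, and positive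
definiteness turns this into a bound on `F̃ₙ`.
-/

open Real

def energy (lam x y : ℝ) : ℝ := x ^ 2 - lam * x * y + y ^ 2

theorem energy_abs_le (lam x y : ℝ) (hy : 0 ≤ lam * y) :
    energy lam y |lam * y - x| ≤ energy lam x y := by
  have hz : lam * y - x ≤ |lam * y - x| := le_abs_self _
  have hsq : |lam * y - x| ^ 2 = (lam * y - x) ^ 2 := sq_abs _
  unfold energy
  nlinarith [mul_le_mul_of_nonneg_left hz hy]

theorem one_sub_half_mul_sq_add_sq_le_energy {lam : ℝ} (hlam : 0 ≤ lam) (x y : ℝ) :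
    (1 - lam / 2) * (x ^ 2 + y ^ 2) ≤ energy lam x y := by
  have key : energy lam x y = (1 - lam / 2) * (x ^ 2 + y ^ 2) + lam / 2 * (x - y) ^ 2 := by
    unfold energy; ring
  rw [key]
  have : 0 ≤ lam / 2 * (x - y) ^ 2 := by positivity
  linarith

section AbsRecurrence

variable {lam : ℝ} {F : ℕ → ℝ} (hrec : ∀ n, F (n + 2) = |lam * F (n + 1) - F n|)
include hrec

theorem nonneg_succ_of_abs_recurrence (hF1 : 0 ≤ F 1) (n : ℕ) : 0 ≤ F (n + 1) := by
  cases n with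
  | zero => exact hF1
  | succ m => rw [hrec m]; exact abs_nonneg _

theorem antitone_energy_of_abs_recurrence (hlam : 0 ≤ lam) (hF1 : 0 ≤ F 1) :
    Antitone fun n => energy lam (F n) (F (n + 1)) := by
  refine antitone_nat_of_succ_le fun n => ?_
  simp only [hrec n]
  exact energy_abs_le lam _ _ (mul_nonneg hlam (nonneg_succ_of_abs_recurrence hrec hF1 n))

end AbsRecurrence

theorem stmt16_general (lam : ℝ) (hlam0 : 0 < lam) (hlam2 : lam < 2)
    (F : ℕ → ℝ) (hF1 : 0 ≤ F 1)
    (hrec : ∀ n, F (n + 2) = |lam * F (n + 1) - F n|) :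
    ∃ C : ℝ, ∀ n, F n ≤ C := by
  have hc : 0 < 1 - lam / 2 := by linarith
  refine ⟨√(energy lam (F 0) (F 1) / (1 - lam / 2)), fun n => ?_⟩
  have hsq : F n ^ 2 ≤ energy lam (F 0) (F 1) / (1 - lam / 2) := by
    rw [le_div_iff₀ hc]
    calc F n ^ 2 * (1 - lam / 2)
        ≤ (1 - lam / 2) * (F n ^ 2 + F (n + 1) ^ 2) := by nlinarith [sq_nonneg (F (n + 1))]
      _ ≤ energy lam (F n) (F (n + 1)) := one_sub_half_mul_sq_add_sq_le_energy hlam0.le _ _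
      _ ≤ energy lam (F 0) (F 1) :=
        antitone_energy_of_abs_recurrence hrec hlam0.le hF1 (Nat.zero_le n)
  exact (le_abs_self _).trans (Real.abs_le_sqrt hsq)

theorem stmt16 (lam : ℝ) (hlam0 : 0 < lam) (hlam2 : lam < 2)
    (F : ℕ → ℝ) (hF0 : 0 ≤ F 0) (hF1 : 0 ≤ F 1) (hne : ¬(F 0 = 0 ∧ F 1 = 0))
    (hrec : ∀ n, F (n + 2) = |lam * F (n + 1) - F n|) :
    ∃ C : ℝ, ∀ n, F n ≤ C :=
  stmt16_general lam hlam0 hlam2 F hF1 hrec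
end

section
/- Let k ≥ 3 and λ = 2cos(π/k). Define (F̃ₙ) by F̃₀, F̃₁ ≥ 0 and F̃_{n+1} = |λ F̃ₙ − F̃_{n−1}|. Then for every n ≥ 0, F̃_{n+k} ≤ F̃ₙ. -/
open Real

theorem stmt17 (k : ℕ) (hk : 3 ≤ k) (lam : ℝ) (hlam : lam = 2 * Real.cos (π / k))
    (F : ℕ → ℝ) (hF0 : 0 ≤ F 0) (hF1 : 0 ≤ F 1)
    (hrec : ∀ n, F (n + 2) = |lam * F (n + 1) - F n|) :
    ∀ n, F (n + k) ≤ F n := by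
  classical
  intro n
  have hkR : (0:ℝ) < (k:ℝ) := by
    have : (3:ℝ) ≤ (k:ℝ) := by exact_mod_cast hk
    linarith
  set θ : ℝ := π / k with hθdef
  have hθpos : 0 < θ := div_pos pi_pos hkR
  have hkθ : (k:ℝ) * θ = π := by
    rw [hθdef]; field_simp
  set s : ℕ → ℝ := fun j => Real.sin (j * θ) with hsdef
  have hFnn : ∀ m, 0 ≤ F m := by
    intro m
    match m with
    | 0 => exact hF0
    | 1 => exact hF1
    | (m+2) => rw [hrec]; exact abs_nonneg _
  have habs : ∀ m, lam * F (m+1) - F m ≤ F (m+2) := fun m => by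
    rw [hrec m]; exact le_abs_self _
  have hsnn : ∀ j, j ≤ k → 0 ≤ s j := by
    intro j hj
    simp only [hsdef]
    apply Real.sin_nonneg_of_nonneg_of_le_pi
    · positivity
    · calc (j:ℝ) * θ ≤ (k:ℝ) * θ := by
            apply mul_le_mul_of_nonneg_right _ hθpos.le
            exact_mod_cast hj
        _ = π := hkθ
  have hs1pos : 0 < s 1 := by
    simp only [hsdef, Nat.cast_one, one_mul]
    apply Real.sin_pos_of_pos_of_lt_pi hθpos
    rw [hθdef]
    apply div_lt_self pi_pos
    have : (3:ℝ) ≤ (k:ℝ) := by exact_mod_cast hk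
    linarith
  have hsk : s k = 0 := by
    simp only [hsdef]; rw [hkθ, Real.sin_pi]
  have hsk1 : s (k-1) = s 1 := by
    simp only [hsdef, Nat.cast_one, one_mul]
    have h1 : ((k-1:ℕ):ℝ) = (k:ℝ) - 1 := by
      have : (1:ℕ) ≤ k := by omega
      push_cast [this]
      ring
    rw [h1, show ((k:ℝ) - 1) * θ = π - θ by rw [← hkθ]; ring, Real.sin_pi_sub]
  have hid : ∀ q : ℕ, s (q+2) + s q = lam * s (q+1) := by
    intro q
    simp only [hsdef]
    push_cast
    rw [show ((q:ℝ)+2) * θ = ((q:ℝ)+1) * θ + θ by ring,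
        show (q:ℝ) * θ = ((q:ℝ)+1) * θ - θ by ring,
        Real.sin_add, Real.sin_sub, hlam]
    ring
  set V : ℕ → ℝ := fun i => s (k-1-i) * F (n+i) - s (k-i) * F (n+i+1) with hVdef
  have hVmono : ∀ i, i ≤ k-2 → V (i+1) ≤ V i := by
    intro i hi
    have h1 : k-1-(i+1) = k-2-i := by omega
    have h2 : k-(i+1) = k-2-i+1 := by omega
    have h3 : k-1-i = k-2-i+1 := by omega
    have h4 : k-i = k-2-i+2 := by omega
    set q := k-2-i with hq
    have e : V i - V (i+1) = s (q+1) * (F (n+i) + F (n+i+2) - lam * F (n+i+1)) := by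
      simp only [hVdef, h1, h2, h3, h4]
      rw [show n+(i+1)+1 = n+i+2 from by omega, show n+(i+1) = n+i+1 from by omega]
      linear_combination (-F (n+i+1)) * hid q
    have hnn : 0 ≤ s (q+1) * (F (n+i) + F (n+i+2) - lam * F (n+i+1)) :=
      mul_nonneg (hsnn (q+1) (by omega)) (by linarith [habs (n+i)])
    linarith
  have hVle : ∀ t, t ≤ k-1 → V t ≤ V 0 := by
    intro t
    induction t with
    | zero => intro _; exact le_refl _
    | succ t ih =>
      intro ht
      exact le_trans (hVmono t (by omega)) (ih (by omega))
  have hV0 : V 0 = s 1 * F n := by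
    simp only [hVdef]
    rw [show k-1-0 = k-1 from by omega, show k-0 = k from by omega,
        show n+0 = n from rfl, hsk1, hsk]
    ring
  have hE : ∀ d q, q + 1 + d = k →
      (∀ i, q ≤ i → i ≤ k-2 → F (n+i+2) = lam * F (n+i+1) - F (n+i)) →
      s 1 * F (n+k) = s (d+1) * F (n+q+1) - s d * F (n+q) := by
    intro d
    induction d with
    | zero =>
      intro q hq _
      rw [show n + q + 1 = n + k from by omega]
      have h0 : s 0 = 0 := by simp [hsdef]
      rw [h0]
      ring
    | succ d ih =>
      intro q hq hmin
      have ih' := ih (q+1) (by omega) (by intro i h1 h2; exact hmin i (by omega) h2)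
      have hstep := hmin q (le_refl q) (by omega)
      rw [show n+(q+1)+1 = n+q+2 from by omega, show n+(q+1) = n+q+1 from by omega] at ih'
      linear_combination ih' + s (d+1) * hstep - F (n+q+1) * hid d
  by_cases hall : ∀ i, i ≤ k-2 → F (n+i+2) = lam * F (n+i+1) - F (n+i)
  · have h := hE (k-1) 0 (by omega) (fun i _ h2 => hall i h2)
    rw [show k-1+1 = k from by omega, show n+0+1 = n+1 from rfl,
        show n+0 = n from rfl, hsk, hsk1] at h
    have h1 : 0 ≤ s 1 * F n := mul_nonneg hs1pos.le (hFnn n)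
    have h2 : s 1 * F (n+k) ≤ s 1 * F n := by linarith
    exact le_of_mul_le_mul_left h2 hs1pos
  · push_neg at hall
    obtain ⟨i0, hi0, hne0⟩ := hall
    have hPt := Nat.findGreatest_spec
      (P := fun i => ¬ (F (n+i+2) = lam * F (n+i+1) - F (n+i))) hi0 hne0
    set t := Nat.findGreatest (fun i => ¬ (F (n+i+2) = lam * F (n+i+1) - F (n+i))) (k-2)
      with htdef
    have htle : t ≤ k-2 := Nat.findGreatest_le _
    have hmax : ∀ i, t < i → i ≤ k-2 → F (n+i+2) = lam * F (n+i+1) - F (n+i) := by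
      intro i h1 h2
      by_contra hc
      exact Nat.findGreatest_is_greatest h1 h2 hc
    set d := k-2-t with hddef
    have hEt := hE d (t+1) (by omega) (by intro i h1 h2; exact hmax i (by omega) h2)
    rw [show n+(t+1)+1 = n+t+2 from by omega, show n+(t+1) = n+t+1 from by omega] at hEt
    have hplus : F (n+t+2) = F (n+t) - lam * F (n+t+1) := by
      rcases abs_choice (lam * F (n+t+1) - F (n+t)) with h | h
      · exact absurd ((hrec (n+t)).trans h) hPt
      · rw [hrec (n+t), h]; ring
    have hVt : s 1 * F (n+k) ≤ V t := by
      have eV : V t = s (d+1) * F (n+t) - s (d+2) * F (n+t+1) := by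
        simp only [hVdef]
        rw [show k-1-t = d+1 from by omega, show k-t = d+2 from by omega]
      have e : s 1 * F (n+k) = V t - 2 * s d * F (n+t+1) := by
        rw [eV]
        linear_combination hEt + s (d+1) * hplus + F (n+t+1) * hid d
      have hnn : 0 ≤ s d * F (n+t+1) := mul_nonneg (hsnn d (by omega)) (hFnn _)
      linarith
    have hfin : s 1 * F (n+k) ≤ s 1 * F n := by
      have := hVle t (by omega)
      linarith [hV0, hVt]
    exact le_of_mul_le_mul_left hfin hs1pos
end

section
/- Let p ∈ (0,1) be fixed, and for each integer k ≥ 3 let p_R(k) ∈ (0,1) be the unique positive solution of (1 − px/(p + (1−p)x))^{k−1} = 1 − x. Then 1 − p_R(k) is asymptotically equivalent to (1−p)^{k−1} as k → ∞; i.e., (1 − p_R(k))/(1−p)^{k−1} → 1. -/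
/-!
With `r(x) = 1 - p x / (p + (1 - p) x)`, the root `x = p_R(k)` satisfies `r(x)^(k-1) = 1 - x`, so
`(1 - x) / (1 - p)^(k-1) = (r(x) / (1 - p))^(k-1)`. Since `r(x) - (1 - p) = p² (1 - x) / (p + (1 - p) x)`,
the base lies between `1` and `1 + p/(1 - p) · (1 - x)`. Comparing with the exponent `2`, where
`r(x)² ≥ 1 - x` forces `x ≥ p² / (p² + (1 - p)²)`, bounds the root away from `0` uniformly in `k`; as
`r(x) ≤ 1 - p x`, this gives `1 - x ≤ ρ^(k-1)` for a fixed `ρ < 1`, and `(1 + C ρ^n)^n → 1`.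
-/

open Real Filter Topology

noncomputable def rBase (p x : ℝ) : ℝ := 1 - p * x / (p + (1 - p) * x)

section rBase

variable {p x : ℝ}

lemma rBase_denom_pos (hp : 0 < p) (hp1 : p < 1) (hx : 0 ≤ x) : 0 < p + (1 - p) * x := by
  nlinarith

lemma rBase_eq_div (hp : 0 < p) (hp1 : p < 1) (hx : 0 ≤ x) :
    rBase p x = (p + (1 - p) * x - p * x) / (p + (1 - p) * x) := by
  rw [rBase, sub_div, div_self (rBase_denom_pos hp hp1 hx).ne']

lemma rBase_sub_one_sub (hp : 0 < p) (hp1 : p < 1) (hx : 0 ≤ x) :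
    rBase p x - (1 - p) = p ^ 2 * (1 - x) / (p + (1 - p) * x) := by
  have hd := rBase_denom_pos hp hp1 hx
  rw [rBase_eq_div hp hp1 hx, eq_div_iff hd.ne', sub_mul, div_mul_cancel₀ _ hd.ne']
  ring

lemma one_sub_le_rBase (hp : 0 < p) (hp1 : p < 1) (hx : 0 ≤ x) (hx1 : x ≤ 1) :
    1 - p ≤ rBase p x := by
  have : 0 ≤ p ^ 2 * (1 - x) / (p + (1 - p) * x) :=
    div_nonneg (mul_nonneg (sq_nonneg p) (sub_nonneg.2 hx1)) (rBase_denom_pos hp hp1 hx).le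
  linarith [rBase_sub_one_sub hp hp1 hx]

lemma rBase_le_one_sub_mul (hp : 0 < p) (hp1 : p < 1) (hx : 0 ≤ x) (hx1 : x ≤ 1) :
    rBase p x ≤ 1 - p * x := by
  have hd := rBase_denom_pos hp hp1 hx
  have : p * x ≤ p * x / (p + (1 - p) * x) :=
    (le_div_iff₀ hd).2 (mul_le_of_le_one_right (by positivity) (by nlinarith))
  rw [rBase]
  linarith

lemma rBase_le_one_sub_add (hp : 0 < p) (hp1 : p < 1) (hx : 0 ≤ x) (hx1 : x ≤ 1) :
    rBase p x ≤ (1 - p) + p * (1 - x) := by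
  have hd := rBase_denom_pos hp hp1 hx
  have : p ^ 2 * (1 - x) / (p + (1 - p) * x) ≤ p * (1 - x) := by
    rw [div_le_iff₀ hd]
    nlinarith [mul_nonneg (mul_nonneg hp.le (sub_nonneg.2 hx1)) (mul_nonneg (sub_nonneg.2 hp1.le) hx)]
  linarith [rBase_sub_one_sub hp hp1 hx]

lemma le_of_one_sub_le_rBase_sq (hp : 0 < p) (hp1 : p < 1) (hx : 0 < x) (hx1 : x < 1)
    (h : 1 - x ≤ rBase p x ^ 2) : p ^ 2 / (p ^ 2 + (1 - p) ^ 2) ≤ x := by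
  have hd := rBase_denom_pos hp hp1 hx.le
  rw [rBase_eq_div hp hp1 hx.le, div_pow, le_div_iff₀ (by positivity)] at h
  have hquad : x * (p ^ 2 * (1 - x) - (1 - p) ^ 2 * x ^ 2) ≤ 0 := by nlinarith
  have : p ^ 2 * (1 - x) ≤ (1 - p) ^ 2 * x ^ 2 := by
    nlinarith [nonpos_of_mul_nonpos_right hquad hx]
  rw [div_le_iff₀ (by positivity)]
  nlinarith [mul_le_mul_of_nonneg_left hx1.le (mul_nonneg (sq_nonneg (1 - p)) hx.le)]

end rBase

lemma tendsto_one_add_mul_pow_pow {C ρ : ℝ} (hC : 0 ≤ C) (hρ : 0 ≤ ρ) (hρ1 : ρ < 1) :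
    Tendsto (fun n : ℕ => (1 + C * ρ ^ n) ^ n) atTop (𝓝 1) := by
  have hexp : Tendsto (fun n : ℕ => exp (C * (n * ρ ^ n))) atTop (𝓝 1) := by
    simpa using ((tendsto_self_mul_const_pow_of_lt_one hρ hρ1).const_mul C).rexp
  refine tendsto_of_tendsto_of_tendsto_of_le_of_le tendsto_const_nhds hexp
    (fun n => one_le_pow₀ (le_add_of_nonneg_right (by positivity))) (fun n => ?_)
  calc (1 + C * ρ ^ n) ^ n ≤ exp (C * ρ ^ n) ^ n := by
        gcongr
        linarith [add_one_le_exp (C * ρ ^ n)]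
    _ = exp (C * (n * ρ ^ n)) := by rw [← exp_nat_mul]; ring_nf

lemma one_le_ratio_and_ratio_le {p x : ℝ} {n : ℕ} (hp : 0 < p) (hp1 : p < 1) (hx : 0 < x)
    (hx1 : x < 1) (hn : 2 ≤ n) (heq : rBase p x ^ n = 1 - x) :
    1 ≤ (1 - x) / (1 - p) ^ n ∧ (1 - x) / (1 - p) ^ n ≤
      (1 + p / (1 - p) * (1 - p * (p ^ 2 / (p ^ 2 + (1 - p) ^ 2))) ^ n) ^ n := by
  have hq : 0 < 1 - p := by linarith
  have hqr := one_sub_le_rBase hp hp1 hx.le hx1.le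
  have hr1 : rBase p x ≤ 1 := by nlinarith [rBase_le_one_sub_mul hp hp1 hx.le hx1.le]
  have hr0 : 0 ≤ rBase p x := hq.le.trans hqr
  have hc : p ^ 2 / (p ^ 2 + (1 - p) ^ 2) ≤ x :=
    le_of_one_sub_le_rBase_sq hp hp1 hx hx1 (heq ▸ pow_le_pow_of_le_one hr0 hr1 hn)
  have hrρ : rBase p x ≤ 1 - p * (p ^ 2 / (p ^ 2 + (1 - p) ^ 2)) := by
    nlinarith [rBase_le_one_sub_mul hp hp1 hx.le hx1.le]
  rw [← heq, ← div_pow]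
  refine ⟨one_le_pow₀ ((one_le_div hq).2 hqr), pow_le_pow_left₀ (by positivity) ?_ n⟩
  calc rBase p x / (1 - p) ≤ ((1 - p) + p * (1 - x)) / (1 - p) := by
        gcongr; exact rBase_le_one_sub_add hp hp1 hx.le hx1.le
    _ = 1 + p / (1 - p) * rBase p x ^ n := by rw [heq]; field_simp
    _ ≤ _ := by gcongr

theorem stmt19 (p : ℝ) (hp : 0 < p) (hp1 : p < 1)
    (pR : ℕ → ℝ)
    (hpR : ∀ k, 3 ≤ k → pR k ∈ Set.Ioo (0:ℝ) 1 ∧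
      (1 - p * pR k / (p + (1 - p) * pR k)) ^ (k - 1) = 1 - pR k) :
    Tendsto (fun k => (1 - pR k) / (1 - p) ^ (k - 1)) atTop (nhds 1) := by
  set ρ := 1 - p * (p ^ 2 / (p ^ 2 + (1 - p) ^ 2))
  have hρ : 0 ≤ ρ ∧ ρ < 1 := by
    have : p ^ 2 / (p ^ 2 + (1 - p) ^ 2) ≤ 1 := by
      rw [div_le_one (by positivity)]; nlinarith
    constructor <;> nlinarith [show 0 < p ^ 2 / (p ^ 2 + (1 - p) ^ 2) by positivity]
  have hupper := (tendsto_one_add_mul_pow_pow (C := p / (1 - p)) (div_nonneg hp.le (by linarith))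
    hρ.1 hρ.2).comp (tendsto_sub_atTop_nat 1)
  have hbounds : ∀ᶠ k in atTop, 1 ≤ (1 - pR k) / (1 - p) ^ (k - 1) ∧
      (1 - pR k) / (1 - p) ^ (k - 1) ≤ (1 + p / (1 - p) * ρ ^ (k - 1)) ^ (k - 1) := by
    filter_upwards [eventually_ge_atTop 3] with k hk
    obtain ⟨⟨hx, hx1⟩, heq⟩ := hpR k hk
    exact one_le_ratio_and_ratio_le hp hp1 hx hx1 (by omega) heq
  exact tendsto_of_tendsto_of_tendsto_of_le_of_le' tendsto_const_nhds hupper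
    (hbounds.mono fun _ h => h.1) (hbounds.mono fun _ h => h.2)
end
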